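/- Let X be a smooth Fano 4-fold and R₁, R₂ extremal rays of X of type (3,2) with exceptional divisors E₁, E₂, such that E₁·R₃ ≥ 0 for every extremal ray R₃ ≠ R₁ and E₁·R₂ = 0. Let H be a nef divisor with H^⊥ ∩ NE(X) = R₂, and set H' := H + (H·C₁)E₁ where C₁ is a curve generating R₁ with E₁·C₁ = −1. Then H' is nef and H'^⊥ ∩ NE(X) = R₁ + R₂; in particular R₁ + R₂ is a two-dimensional face of NE(X). -/
import Mathlib


/-!
Lemma 2.3 (`fabri`) key step: let `X` be a smooth Fano 4-fold and `R₁, R₂` extremal rays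
of type (3,2) with exceptional divisors `E₁, E₂`, `E₁·R₃ ≥ 0` for every extremal ray
`R₃ ≠ R₁`, and `E₁·R₂ = 0`. If `H` is nef with `H^⊥ ∩ NE(X) = R₂` and
`H' := H + (H·C₁)E₁` where `C₁` generates `R₁` with `E₁·C₁ = −1`, then `H'` is nef and
`H'^⊥ ∩ NE(X) = R₁ + R₂`; in particular `R₁ + R₂` is a two-dimensional face of `NE(X)`.
-/

set_option linter.unusedSectionVars false
set_option linter.unusedVariables false
set_option maxHeartbeats 1000000

open Module Pointwise

variable {N₁ : Type*} [AddCommGroup N₁] [Module ℝ N₁] [FiniteDimensional ℝ N₁]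

def IsPolyhedralCone (C : Set N₁) : Prop :=
  ∃ s : Finset N₁, C = {x | ∃ c : N₁ → ℝ, (∀ v, 0 ≤ c v) ∧ x = ∑ v ∈ s, c v • v}

def IsSubcone (F : Set N₁) : Prop :=
  0 ∈ F ∧ (∀ x ∈ F, ∀ y ∈ F, x + y ∈ F) ∧ ∀ t : ℝ, 0 ≤ t → ∀ x ∈ F, t • x ∈ F

def IsFaceOf (C F : Set N₁) : Prop :=
  IsSubcone F ∧ F ⊆ C ∧ ∀ x ∈ C, ∀ y ∈ C, x + y ∈ F → x ∈ F ∧ y ∈ F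

def IsExtremalRayOf (C R : Set N₁) : Prop :=
  IsFaceOf C R ∧ Module.finrank ℝ (Submodule.span ℝ R) = 1

/-! ### Auxiliary cone development -/

def coneOf (s : Finset N₁) : Set N₁ :=
  {x | ∃ c : N₁ → ℝ, (∀ v, 0 ≤ c v) ∧ x = ∑ v ∈ s, c v • v}

theorem coneOf_zero_mem (s : Finset N₁) : (0 : N₁) ∈ coneOf s :=
  ⟨0, fun _ => le_refl 0, by simp⟩

theorem coneOf_add_mem {s : Finset N₁} {x y : N₁} (hx : x ∈ coneOf s) (hy : y ∈ coneOf s) :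
    x + y ∈ coneOf s := by
  obtain ⟨c, hc, rfl⟩ := hx; obtain ⟨d, hd, rfl⟩ := hy
  refine ⟨c + d, fun v => add_nonneg (hc v) (hd v), ?_⟩
  rw [← Finset.sum_add_distrib]
  exact Finset.sum_congr rfl fun v _ => by simp [add_smul]

theorem coneOf_smul_mem {s : Finset N₁} {t : ℝ} (ht : 0 ≤ t) {x : N₁} (hx : x ∈ coneOf s) :
    t • x ∈ coneOf s := by
  obtain ⟨c, hc, rfl⟩ := hx
  refine ⟨t • c, fun v => mul_nonneg ht (hc v), ?_⟩
  rw [Finset.smul_sum]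
  exact Finset.sum_congr rfl fun v _ => by simp [smul_smul]

theorem mem_coneOf {s : Finset N₁} {v : N₁} (hv : v ∈ s) : v ∈ coneOf s := by
  classical
  refine ⟨fun u => if u = v then 1 else 0, fun u => by positivity, ?_⟩
  have : ∀ u ∈ s, (if u = v then (1:ℝ) else 0) • u = if u = v then v else 0 := by
    intro u _; split <;> simp_all
  rw [Finset.sum_congr rfl this, Finset.sum_ite_eq' s v (fun _ => v), if_pos hv]

theorem coneOf_subset {s : Finset N₁} {C : Set N₁} (h0 : (0 : N₁) ∈ C)
    (hadd : ∀ x ∈ C, ∀ y ∈ C, x + y ∈ C) (hsmul : ∀ t : ℝ, 0 ≤ t → ∀ x ∈ C, t • x ∈ C)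
    (hs : ∀ v ∈ s, v ∈ C) : coneOf s ⊆ C := by
  rintro x ⟨c, hc, rfl⟩
  exact Finset.sum_induction _ (· ∈ C) (fun a b ha hb => hadd a ha b hb) h0
    (fun v hv => hsmul (c v) (hc v) v (hs v hv))

theorem coneOf_mono {s t : Finset N₁} (h : s ⊆ t) : coneOf s ⊆ coneOf t :=
  coneOf_subset (coneOf_zero_mem t) (fun x hx y hy => coneOf_add_mem hx hy)
    (fun a ha x hx => coneOf_smul_mem ha hx) (fun v hv => mem_coneOf (h hv))

theorem coneOf_erase [DecidableEq N₁] {s : Finset N₁} {v : N₁} (hv : v ∈ s) (h : v ∈ coneOf (s.erase v)) :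
    coneOf (s.erase v) = coneOf s := by
  classical
  refine Set.Subset.antisymm (coneOf_mono (Finset.erase_subset v s)) ?_
  refine coneOf_subset (coneOf_zero_mem _) (fun x hx y hy => coneOf_add_mem hx hy)
    (fun a ha x hx => coneOf_smul_mem ha hx) (fun u hu => ?_)
  by_cases hu' : u = v
  · exact hu' ▸ h
  · exact mem_coneOf (Finset.mem_erase.2 ⟨hu', hu⟩)

theorem exists_minimal [DecidableEq N₁] (s : Finset N₁) : ∃ s' : Finset N₁,
    coneOf (N₁ := N₁) s' = coneOf s ∧ ∀ v ∈ s', v ∉ coneOf (s'.erase v) := by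
  classical
  induction s using Finset.strongInduction with
  | _ s ih =>
    by_cases h : ∃ v ∈ s, v ∈ coneOf (s.erase v)
    · obtain ⟨v, hv, hvc⟩ := h
      obtain ⟨s', h1, h2⟩ := ih (s.erase v) (Finset.erase_ssubset hv)
      exact ⟨s', by rw [h1, coneOf_erase hv hvc], h2⟩
    · push_neg at h
      exact ⟨s, rfl, h⟩

theorem sum_eq_zero_of_salient {C : Set N₁} (h0 : (0 : N₁) ∈ C)
    (hadd : ∀ x ∈ C, ∀ y ∈ C, x + y ∈ C)
    (hsal : ∀ x ∈ C, -x ∈ C → x = 0) {α : Type*} (s : Finset α) (f : α → N₁)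
    (hf : ∀ a ∈ s, f a ∈ C) (h : ∑ a ∈ s, f a = 0) : ∀ a ∈ s, f a = 0 := by
  classical
  induction s using Finset.induction_on with
  | empty => simp
  | @insert a s ha ih =>
    rw [Finset.sum_insert ha] at h
    have hS : ∑ b ∈ s, f b ∈ C :=
      Finset.sum_induction _ (· ∈ C) (fun a b hx hy => hadd a hx b hy) h0
        (fun b hb => hf b (Finset.mem_insert_of_mem hb))
    have hfa0 : f a = 0 := by
      apply hsal (f a) (hf a (Finset.mem_insert_self a s))
      have h2 : -(f a) = ∑ b ∈ s, f b := neg_eq_of_add_eq_zero_right h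
      rw [h2]; exact hS
    have hsum0 : ∑ b ∈ s, f b = 0 := by rw [hfa0, zero_add] at h; exact h
    intro b hb
    rcases Finset.mem_insert.1 hb with rfl | hb'
    · exact hfa0
    · exact ih (fun a' ha' => hf a' (Finset.mem_insert_of_mem ha')) hsum0 b hb'

def rayOf (v : N₁) : Set N₁ := {x | ∃ t : ℝ, 0 ≤ t ∧ x = t • v}

theorem rayOf_subcone (v : N₁) : IsSubcone (rayOf v) :=
  ⟨⟨0, le_refl 0, (zero_smul ℝ v).symm⟩,
   fun _ ⟨t, ht, hx⟩ _ ⟨u, hu, hy⟩ => ⟨t + u, add_nonneg ht hu, by rw [hx, hy, add_smul]⟩,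
   fun a ha _ ⟨t, ht, hx⟩ => ⟨a * t, mul_nonneg ha ht, by rw [hx, smul_smul]⟩⟩

theorem self_mem_rayOf (v : N₁) : v ∈ rayOf v := ⟨1, zero_le_one, (one_smul ℝ v).symm⟩

theorem minimal_extremal [DecidableEq N₁] {s : Finset N₁}
    (hmin : ∀ v ∈ s, v ∉ coneOf (s.erase v))
    (hsal : ∀ x ∈ coneOf s, -x ∈ coneOf s → x = 0) {v : N₁} (hv : v ∈ s) :
    v ≠ 0 ∧ IsExtremalRayOf (coneOf s) (rayOf v) := by
  have hne0 : ∀ u ∈ s, u ≠ (0 : N₁) := fun u hu h0 => hmin u hu (h0 ▸ coneOf_zero_mem _)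
  have hv0 : v ≠ 0 := hne0 v hv
  refine ⟨hv0, ⟨⟨rayOf_subcone v, ?_, ?_⟩, ?_⟩⟩
  · rintro x ⟨t, ht, rfl⟩
    exact coneOf_smul_mem ht (mem_coneOf hv)
  · rintro x hx y hy ⟨t, ht, hxy⟩
    obtain ⟨c, hc, rfl⟩ := hx
    obtain ⟨d, hd, rfl⟩ := hy
    have he : ∀ u, 0 ≤ c u + d u := fun u => add_nonneg (hc u) (hd u)
    have hsum : ∑ u ∈ s, (c u + d u) • u = t • v := by
      rw [← hxy, ← Finset.sum_add_distrib]
      exact Finset.sum_congr rfl fun u _ => add_smul (c u) (d u) u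
    have hsplit : (c v + d v) • v + ∑ u ∈ s.erase v, (c u + d u) • u = t • v :=
      (Finset.add_sum_erase s (fun u => (c u + d u) • u) hv).trans hsum
    set k := c v + d v with hk
    set w := ∑ u ∈ s.erase v, (c u + d u) • u with hw
    have hwv : w = (t - k) • v := by
      rw [sub_smul]
      exact eq_sub_of_add_eq' hsplit
    by_cases hkt : k < t
    · exfalso
      apply hmin v hv
      refine ⟨fun u => (t - k)⁻¹ * (c u + d u),
        fun u => mul_nonneg (inv_nonneg.2 (by linarith)) (he u), ?_⟩
      have h1 : (t - k)⁻¹ • w = v := by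
        rw [hwv, smul_smul, inv_mul_cancel₀ (by linarith : t - k ≠ 0), one_smul]
      have h2 : ∑ u ∈ s.erase v, ((t - k)⁻¹ * (c u + d u)) • u = (t - k)⁻¹ • w := by
        rw [hw, Finset.smul_sum]
        exact Finset.sum_congr rfl fun u _ => (smul_smul _ _ _).symm
      exact (h2.trans h1).symm
    · push_neg at hkt
      have hwC : w ∈ coneOf s :=
        coneOf_mono (Finset.erase_subset v s) ⟨fun u => c u + d u, he, rfl⟩
      have hwC' : -w ∈ coneOf s := by
        rw [hwv, ← neg_smul, neg_sub]
        exact coneOf_smul_mem (by linarith) (mem_coneOf hv)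
      have hw0 : w = 0 := hsal w hwC hwC'
      have hterm : ∀ u ∈ s.erase v, (c u + d u) • u = 0 := by
        apply sum_eq_zero_of_salient (coneOf_zero_mem s)
          (fun x hx y hy => coneOf_add_mem hx hy) hsal
        · intro u hu
          exact coneOf_smul_mem (he u) (mem_coneOf (Finset.mem_erase.1 hu).2)
        · rw [← hw]; exact hw0
      have hcd0 : ∀ u ∈ s.erase v, c u = 0 ∧ d u = 0 := by
        intro u hu
        have hu0 : u ≠ 0 := hne0 u (Finset.mem_erase.1 hu).2
        have := hterm u hu
        rcases smul_eq_zero.1 this with h' | h'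
        · constructor <;> linarith [hc u, hd u]
        · exact absurd h' hu0
      constructor
      · refine ⟨c v, hc v, ?_⟩
        rw [← Finset.add_sum_erase s _ hv, Finset.sum_eq_zero (fun u hu => by
          rw [(hcd0 u hu).1, zero_smul]), add_zero]
      · refine ⟨d v, hd v, ?_⟩
        rw [← Finset.add_sum_erase s _ hv, Finset.sum_eq_zero (fun u hu => by
          rw [(hcd0 u hu).2, zero_smul]), add_zero]
  · have h1 : Submodule.span ℝ (rayOf v) = Submodule.span ℝ {v} := by
      apply le_antisymm
      · rw [Submodule.span_le]
        rintro x ⟨t, ht, rfl⟩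
        exact Submodule.smul_mem _ t (Submodule.subset_span rfl)
      · apply Submodule.span_mono
        intro x hx
        rw [Set.mem_singleton_iff] at hx
        exact hx ▸ self_mem_rayOf v
    rw [h1]
    exact finrank_span_singleton hv0

theorem span_eq_of_mem {R : Set N₁} {x : N₁} (hx : x ∈ R) (hx0 : x ≠ 0)
    (hrk : finrank ℝ (Submodule.span ℝ R) = 1) :
    Submodule.span ℝ R = Submodule.span ℝ {x} := by
  symm
  apply Submodule.eq_of_le_of_finrank_le (Submodule.span_mono (Set.singleton_subset_iff.2 hx))
  rw [hrk, finrank_span_singleton hx0]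

theorem extremal_eq_rayOf {NE R : Set N₁}
    (hNEsmul : ∀ t : ℝ, 0 ≤ t → ∀ x ∈ NE, t • x ∈ NE)
    (hsal : ∀ x ∈ NE, -x ∈ NE → x = 0)
    (hR : IsExtremalRayOf NE R) {x : N₁} (hx : x ∈ R) (hx0 : x ≠ 0) : R = rayOf x := by
  obtain ⟨⟨⟨h0, hadd, hs⟩, hsub, hface⟩, hrk⟩ := hR
  apply Set.Subset.antisymm
  · intro y hy
    have hmem : y ∈ Submodule.span ℝ R := Submodule.subset_span hy
    rw [span_eq_of_mem hx hx0 hrk, Submodule.mem_span_singleton] at hmem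
    obtain ⟨t, rfl⟩ := hmem
    rcases le_or_gt 0 t with ht | ht
    · exact ⟨t, ht, rfl⟩
    · have h1 : t • x ∈ NE := hsub hy
      have h2 : -(t • x) ∈ NE := by
        rw [← neg_smul]
        exact hNEsmul (-t) (by linarith) x (hsub hx)
      exact ⟨0, le_refl 0, by rw [hsal _ h1 h2, zero_smul]⟩
  · rintro y ⟨t, ht, rfl⟩
    exact hs t ht x hx

theorem ray_eq_ray {NE R R' : Set N₁}
    (hNEsmul : ∀ t : ℝ, 0 ≤ t → ∀ x ∈ NE, t • x ∈ NE)
    (hsal : ∀ x ∈ NE, -x ∈ NE → x = 0)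
    (hR : IsExtremalRayOf NE R) (hR' : IsExtremalRayOf NE R')
    {x : N₁} (hx : x ∈ R) (hx' : x ∈ R') (hx0 : x ≠ 0) : R = R' := by
  rw [extremal_eq_rayOf hNEsmul hsal hR hx hx0,
    extremal_eq_rayOf hNEsmul hsal hR' hx' hx0]

theorem stmt9 (NE : Set N₁) (hNE : IsPolyhedralCone NE)
    (hsalient : ∀ x ∈ NE, -x ∈ NE → x = 0)
    (R₁ R₂ : Set N₁) (hR₁ : IsExtremalRayOf NE R₁) (hR₂ : IsExtremalRayOf NE R₂)
    (hne : R₁ ≠ R₂)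
    (E₁ E₂ : Module.Dual ℝ N₁)
    -- R₁, R₂ are of type (3,2) with exceptional divisors E₁, E₂
    (R₁R₂OfType32WithExcDivisorsE₁E₂ : Prop) (htype : R₁R₂OfType32WithExcDivisorsE₁E₂)
    -- C₁ is the class of a general fiber over R₁, with E₁·C₁ = −1
    (C₁ : N₁) (hC₁R₁ : C₁ ∈ R₁) (hC₁0 : C₁ ≠ 0) (hE₁C₁ : E₁ C₁ = -1)
    -- E₁·R₃ ≥ 0 for every extremal ray R₃ ≠ R₁
    (hE₁pos : ∀ R₃, IsExtremalRayOf NE R₃ → R₃ ≠ R₁ → ∀ x ∈ R₃, 0 ≤ E₁ x)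
    -- E₁·R₂ = 0
    (hE₁R₂ : ∀ x ∈ R₂, E₁ x = 0)
    -- H is nef with H^⊥ ∩ NE(X) = R₂
    (H : Module.Dual ℝ N₁) (hHnef : ∀ x ∈ NE, 0 ≤ H x)
    (hHperp : {x ∈ NE | H x = 0} = R₂) :
    (∀ x ∈ NE, 0 ≤ (H + H C₁ • E₁) x) ∧
    {x ∈ NE | (H + H C₁ • E₁) x = 0} = R₁ + R₂ ∧
    IsFaceOf NE (R₁ + R₂) ∧
    Module.finrank ℝ (Submodule.span ℝ (R₁ + R₂ : Set N₁)) = 2 := by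
  classical
  obtain ⟨s₀, hs₀⟩ := hNE
  obtain ⟨s, hseq, hsmin⟩ := exists_minimal (N₁ := N₁) s₀
  have hNEs : NE = coneOf s := by rw [hs₀]; exact hseq.symm
  have hsal' : ∀ x ∈ coneOf s, -x ∈ coneOf s → x = 0 := hNEs ▸ hsalient
  have hNE0 : (0 : N₁) ∈ NE := hNEs ▸ coneOf_zero_mem s
  have hNEadd : ∀ x ∈ NE, ∀ y ∈ NE, x + y ∈ NE := by
    rw [hNEs]; exact fun x hx y hy => coneOf_add_mem hx hy
  have hNEsmul : ∀ t : ℝ, 0 ≤ t → ∀ x ∈ NE, t • x ∈ NE := by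
    rw [hNEs]; exact fun t ht x hx => coneOf_smul_mem ht hx
  have hgen : ∀ v ∈ s, v ≠ 0 ∧ IsExtremalRayOf NE (rayOf v) := by
    intro v hv
    have h := minimal_extremal hsmin hsal' hv
    exact ⟨h.1, hNEs ▸ h.2⟩
  set H' := H + H C₁ • E₁ with hH'def
  have hC₁NE : C₁ ∈ NE := hR₁.1.2.1 hC₁R₁
  have hR₁span : Submodule.span ℝ R₁ = Submodule.span ℝ {C₁} :=
    span_eq_of_mem hC₁R₁ hC₁0 hR₁.2
  have hapos : 0 < H C₁ := by
    rcases lt_or_eq_of_le (hHnef C₁ hC₁NE) with h | h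
    · exact h
    · exfalso
      have hC₁R₂ : C₁ ∈ R₂ := by rw [← hHperp]; exact ⟨hC₁NE, h.symm⟩
      exact hne (ray_eq_ray hNEsmul hsalient hR₁ hR₂ hC₁R₁ hC₁R₂ hC₁0)
  have hH'C₁ : H' C₁ = 0 := by
    simp [hH'def, hE₁C₁]
  have hgenkey : ∀ v ∈ s, 0 ≤ H' v ∧ (H' v = 0 → v ∈ R₁ ∪ R₂) := by
    intro v hv
    obtain ⟨hv0, hvext⟩ := hgen v hv
    have hvNE : v ∈ NE := hNEs ▸ mem_coneOf hv
    by_cases hrv : rayOf v = R₁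
    · have hvR₁ : v ∈ R₁ := hrv ▸ self_mem_rayOf v
      have hmem : v ∈ Submodule.span ℝ {C₁} := hR₁span ▸ Submodule.subset_span hvR₁
      obtain ⟨t, htv⟩ := Submodule.mem_span_singleton.1 hmem
      have h0 : H' v = 0 := by rw [← htv, map_smul, hH'C₁, smul_zero]
      exact ⟨h0.ge, fun _ => Or.inl hvR₁⟩
    · have hE₁v : 0 ≤ E₁ v := hE₁pos (rayOf v) hvext hrv v (self_mem_rayOf v)
      have hHv : 0 ≤ H v := hHnef v hvNE
      have h1 : H' v = H v + H C₁ * E₁ v := by simp [hH'def]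
      constructor
      · rw [h1]; exact add_nonneg hHv (mul_nonneg hapos.le hE₁v)
      · intro h0
        rw [h1] at h0
        have hHv0 : H v = 0 := by nlinarith [mul_nonneg hapos.le hE₁v]
        exact Or.inr (by rw [← hHperp]; exact ⟨hvNE, hHv0⟩)
  have part1 : ∀ x ∈ NE, 0 ≤ H' x := by
    rw [hNEs]
    rintro x ⟨c, hc, rfl⟩
    rw [map_sum]
    refine Finset.sum_nonneg fun v hv => ?_
    rw [map_smul, smul_eq_mul]
    exact mul_nonneg (hc v) (hgenkey v hv).1
  -- subcone structure of R₁ + R₂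
  have h0₁ : (0 : N₁) ∈ R₁ := hR₁.1.1.1
  have h0₂ : (0 : N₁) ∈ R₂ := hR₂.1.1.1
  have hmem : ∀ y : N₁, y ∈ R₁ ∪ R₂ → y ∈ R₁ + R₂ := by
    rintro y (hy | hy)
    · exact Set.mem_add.2 ⟨y, hy, 0, h0₂, add_zero y⟩
    · exact Set.mem_add.2 ⟨0, h0₁, y, hy, zero_add y⟩
  have haddRR : ∀ p ∈ R₁ + R₂, ∀ q ∈ R₁ + R₂, p + q ∈ R₁ + R₂ := by
    intro p hp q hq
    obtain ⟨p₁, hp₁, p₂, hp₂, rfl⟩ := Set.mem_add.1 hp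
    obtain ⟨q₁, hq₁, q₂, hq₂, rfl⟩ := Set.mem_add.1 hq
    exact Set.mem_add.2 ⟨p₁ + q₁, hR₁.1.1.2.1 _ hp₁ _ hq₁,
      p₂ + q₂, hR₂.1.1.2.1 _ hp₂ _ hq₂, by abel⟩
  have hsmulRR : ∀ t : ℝ, 0 ≤ t → ∀ x ∈ R₁ + R₂, t • x ∈ R₁ + R₂ := by
    intro t ht x hx
    obtain ⟨y, hy, z, hz, rfl⟩ := Set.mem_add.1 hx
    exact Set.mem_add.2 ⟨t • y, hR₁.1.1.2.2 t ht y hy, t • z, hR₂.1.1.2.2 t ht z hz,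
      (smul_add t y z).symm⟩
  have hsubconeRR : IsSubcone (R₁ + R₂) := ⟨hmem 0 (Or.inl h0₁), haddRR, hsmulRR⟩
  -- H' vanishes on R₁ and R₂
  have hH'R₁ : ∀ x ∈ R₁, H' x = 0 := by
    intro x hx
    obtain ⟨t, htx⟩ := Submodule.mem_span_singleton.1 (hR₁span ▸ Submodule.subset_span hx)
    rw [← htx, map_smul, hH'C₁, smul_zero]
  have hH'R₂ : ∀ x ∈ R₂, H' x = 0 := by
    intro x hx
    have hx' : x ∈ NE ∧ H x = 0 := by rw [← hHperp] at hx; exact hx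
    have h1 : H' x = H x + H C₁ * E₁ x := by simp [hH'def]
    rw [h1, hx'.2, hE₁R₂ x hx, mul_zero, add_zero]
  have hsupset : R₁ + R₂ ⊆ {x ∈ NE | H' x = 0} := by
    intro x hx
    obtain ⟨y, hy, z, hz, rfl⟩ := Set.mem_add.1 hx
    exact ⟨hNEadd y (hR₁.1.2.1 hy) z (hR₂.1.2.1 hz),
      by rw [map_add, hH'R₁ y hy, hH'R₂ z hz, add_zero]⟩
  have hsubset : {x ∈ NE | H' x = 0} ⊆ R₁ + R₂ := by
    rintro x ⟨hxNE, hx0⟩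
    rw [hNEs] at hxNE
    obtain ⟨c, hc, rfl⟩ := hxNE
    rw [map_sum] at hx0
    simp only [map_smul, smul_eq_mul] at hx0
    have hterms := (Finset.sum_eq_zero_iff_of_nonneg
      (fun v hv => mul_nonneg (hc v) (hgenkey v hv).1)).1 hx0
    refine Finset.sum_induction _ (· ∈ R₁ + R₂) (fun a b ha hb => haddRR a ha b hb) (hmem 0 (Or.inl h0₁)) ?_
    intro v hv
    rcases mul_eq_zero.1 (hterms v hv) with h | h
    · rw [h, zero_smul]; exact hmem 0 (Or.inl h0₁)
    · rcases (hgenkey v hv).2 h with h' | h'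
      · exact hmem _ (Or.inl (hR₁.1.1.2.2 (c v) (hc v) v h'))
      · exact hmem _ (Or.inr (hR₂.1.1.2.2 (c v) (hc v) v h'))
  have part2 : {x ∈ NE | H' x = 0} = R₁ + R₂ := Set.Subset.antisymm hsubset hsupset
  have part3 : IsFaceOf NE (R₁ + R₂) := by
    refine ⟨hsubconeRR, fun x hx => (hsupset hx).1, ?_⟩
    intro x hx y hy hxy
    have h0 : H' (x + y) = 0 := (hsupset hxy).2
    rw [map_add] at h0
    have hx0 : H' x = 0 := by linarith [part1 x hx, part1 y hy]
    have hy0 : H' y = 0 := by linarith [part1 x hx, part1 y hy]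
    exact ⟨part2 ▸ (⟨hx, hx0⟩ : x ∈ {x ∈ NE | H' x = 0}),
      part2 ▸ (⟨hy, hy0⟩ : y ∈ {x ∈ NE | H' x = 0})⟩
  -- rank computation
  obtain ⟨c₂, hc₂R₂, hc₂0⟩ : ∃ c₂ ∈ R₂, c₂ ≠ (0 : N₁) := by
    by_contra h
    push_neg at h
    have hsub : R₂ ⊆ ({0} : Set N₁) := fun x hx => h x hx
    have hle : Submodule.span ℝ R₂ ≤ Submodule.span ℝ ({0} : Set N₁) := Submodule.span_mono hsub
    rw [Submodule.span_zero_singleton, le_bot_iff] at hle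
    have := hR₂.2
    rw [hle, finrank_bot] at this
    exact absurd this (by norm_num)
  have hR₂span : Submodule.span ℝ R₂ = Submodule.span ℝ {c₂} :=
    span_eq_of_mem hc₂R₂ hc₂0 hR₂.2
  have hspanne : Submodule.span ℝ R₁ ≠ Submodule.span ℝ R₂ := by
    intro h
    have hmem' : c₂ ∈ Submodule.span ℝ {C₁} := by
      rw [← hR₁span, h]; exact Submodule.subset_span hc₂R₂
    obtain ⟨t, htc⟩ := Submodule.mem_span_singleton.1 hmem'
    have ht0 : t ≠ 0 := fun h0 => hc₂0 (by rw [← htc, h0, zero_smul])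
    have hc₂NE : c₂ ∈ NE := hR₂.1.2.1 hc₂R₂
    have htpos : 0 < t := by
      rcases lt_trichotomy t 0 with h' | h' | h'
      · exfalso
        have hneg : -c₂ ∈ NE := by
          rw [← htc, ← neg_smul]
          exact hNEsmul (-t) (by linarith) C₁ hC₁NE
        exact hc₂0 (hsalient c₂ hc₂NE hneg)
      · exact absurd h' ht0
      · exact h'
    have hC₁R₂' : C₁ ∈ R₂ := by
      have heq : C₁ = t⁻¹ • c₂ := by
        rw [← htc, smul_smul, inv_mul_cancel₀ ht0, one_smul]
      rw [heq]
      exact hR₂.1.1.2.2 t⁻¹ (by positivity) c₂ hc₂R₂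
    exact hne (ray_eq_ray hNEsmul hsalient hR₁ hR₂ hC₁R₁ hC₁R₂' hC₁0)
  have hspanRR : Submodule.span ℝ (R₁ + R₂ : Set N₁)
      = Submodule.span ℝ R₁ ⊔ Submodule.span ℝ R₂ := by
    apply le_antisymm
    · rw [Submodule.span_le]
      intro x hx
      obtain ⟨y, hy, z, hz, rfl⟩ := Set.mem_add.1 hx
      exact Submodule.add_mem _ (Submodule.mem_sup_left (Submodule.subset_span hy))
        (Submodule.mem_sup_right (Submodule.subset_span hz))
    · refine sup_le (Submodule.span_mono fun y hy => hmem y (Or.inl hy))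
        (Submodule.span_mono fun y hy => hmem y (Or.inr hy))
  have hinf : Submodule.span ℝ R₁ ⊓ Submodule.span ℝ R₂ = ⊥ := by
    by_contra h
    have h1 : finrank ℝ ↥(Submodule.span ℝ R₁ ⊓ Submodule.span ℝ R₂) ≠ 0 :=
      fun h0 => h (Submodule.finrank_eq_zero.1 h0)
    have h2 : Submodule.span ℝ R₁ ⊓ Submodule.span ℝ R₂ = Submodule.span ℝ R₁ :=
      Submodule.eq_of_le_of_finrank_le inf_le_left
        (by rw [hR₁.2]; omega)
    have h3 : Submodule.span ℝ R₁ ≤ Submodule.span ℝ R₂ := h2 ▸ inf_le_right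
    exact hspanne (Submodule.eq_of_le_of_finrank_le h3 (by rw [hR₁.2, hR₂.2]))
  have part4 : Module.finrank ℝ (Submodule.span ℝ (R₁ + R₂ : Set N₁)) = 2 := by
    rw [hspanRR]
    have hh := Submodule.finrank_sup_add_finrank_inf_eq
      (Submodule.span ℝ R₁) (Submodule.span ℝ R₂)
    rw [hinf, finrank_bot, hR₁.2, hR₂.2] at hh
    omega
  exact ⟨part1, part2, part3, part4⟩
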